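/- arXiv:2009.11824 — 3 statements merged into one kernel-verified Lean document; each statement's English description precedes it below -/
import Mathlib

section
/- Let B, C, C′, B′ be k×k matrices over a ring, each with bandwidth at most w, and let A be the 2k×2k block matrix A = [[B, C], [C′, B′]]. Let π be the interleaving permutation of {1, …, 2k} that sends position 2i−1 to row i of the first block (index i) and position 2i to row i of the second block (index k+i), for 1 ≤ i ≤ k, i.e. the reordering (1, …, k, k+1, …, 2k) → (1, k+1, 2, k+2, …, k, 2k). Then the permuted matrix A′ defined by A′ₚ_q = A_{π(p)π(q)} has bandwidth at most 2w + 1. (This is the content of Lemma 3 of the paper: a suitable simultaneous permutation of rows and columns transforms a 2×2-block matrix whose blocks are banded of bandwidth w into a banded matrix of bandwidth O(w).) -/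
open Matrix

/-- The interleaving permutation of `{0, …, 2k-1}` (0-indexed): position `2i` is sent
to index `i` of the first block and position `2i+1` to index `i` of the second block. -/
def interleave (k : ℕ) (p : Fin (2 * k)) : Fin k ⊕ Fin k :=
  if (p : ℕ) % 2 = 0 then
    Sum.inl ⟨(p : ℕ) / 2, by have := p.isLt; omega⟩
  else
    Sum.inr ⟨(p : ℕ) / 2, by have := p.isLt; omega⟩

private lemma half_bound {w : ℕ} (a b : ℕ) (h : ((2 * w + 1 : ℕ) : ℤ) < |(a : ℤ) - (b : ℤ)|) :
    (w : ℤ) < |((a / 2 : ℕ) : ℤ) - ((b / 2 : ℕ) : ℤ)| := by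
  simp only [lt_abs] at h ⊢
  omega

/-- Lemma 3 of the paper: if the four `k × k` blocks of the block matrix
`A = [[B, C], [C', B']]` each have bandwidth at most `w`, then the matrix obtained by
simultaneously permuting rows and columns of `A` by the interleaving permutation
`(1, …, k, k+1, …, 2k) → (1, k+1, 2, k+2, …, k, 2k)` has bandwidth at most `2w + 1`. -/
theorem bandwidth_interleave_fromBlocks {R : Type*} [Ring R] {k w : ℕ}
    (B C C' B' : Matrix (Fin k) (Fin k) R)
    (hB : ∀ i j : Fin k, (w : ℤ) < |(i : ℤ) - (j : ℤ)| → B i j = 0)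
    (hC : ∀ i j : Fin k, (w : ℤ) < |(i : ℤ) - (j : ℤ)| → C i j = 0)
    (hC' : ∀ i j : Fin k, (w : ℤ) < |(i : ℤ) - (j : ℤ)| → C' i j = 0)
    (hB' : ∀ i j : Fin k, (w : ℤ) < |(i : ℤ) - (j : ℤ)| → B' i j = 0) :
    ∀ p q : Fin (2 * k), ((2 * w + 1 : ℕ) : ℤ) < |(p : ℤ) - (q : ℤ)| →
      Matrix.fromBlocks B C C' B' (interleave k p) (interleave k q) = 0 := by
  intro p q h
  have key := half_bound (w := w) (p : ℕ) (q : ℕ) h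
  unfold interleave
  split_ifs <;> simp only [Matrix.fromBlocks_apply₁₁, Matrix.fromBlocks_apply₁₂,
    Matrix.fromBlocks_apply₂₁, Matrix.fromBlocks_apply₂₂]
  · exact hB _ _ key
  · exact hC _ _ key
  · exact hC' _ _ key
  · exact hB' _ _ key
end

section
/- Let n ≥ 1 and s = (s₁, …, s_n) be a vector of positive integers. For each i let Vᵢ be a set of sᵢ 'copies' of vertex i, the sets Vᵢ pairwise disjoint, and let G_s be the graph on V₁ ∪ … ∪ V_n whose edges join every copy of i to every copy of j for all i ≠ j (no edges inside any Vᵢ). Let τ : {(i,j) : 1 ≤ i < j ≤ n} → ℕ satisfy Σ_{j ≠ i} τ_{ij} = sᵢ for every i (an s-matching). Then the number of perfect matchings π of G_s such that, for every pair i < j, exactly τ_{ij} edges of π join Vᵢ to Vⱼ, equals s!/τ!, where s! = Π_i sᵢ! and τ! = Π_{i<j} τ_{ij}!. (This is the fiber-counting step in the proof of Lemma 7 of the paper.) -/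
/-!
Double counting. Let the darts be the oriented edges of the multigraph on `{1, …, n}` with
`τ i j` parallel edges between `i < j`, and call a bijection from the copies onto the darts a
labelling if it sends every copy of `i` to a dart leaving `i`. Since `s i` darts leave `i`, there
are `s!` labellings. A labelling `F` induces the perfect matching `F⁻¹ ∘ reverse ∘ F` of type `τ`.
Conversely, the labellings inducing a matching `π` of type `τ` are determined by where they send
the lower endpoints of the edges of `π`, which must be a bijection onto the edges of the multigraph
preserving the pair of parts joined; there are `τ!` of these.
-/

open Equiv Finset
open scoped Nat

theorem card_fiberwise_equiv {α β γ : Type*} [Fintype α] [DecidableEq α] [Fintype β]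
    [DecidableEq β] [Fintype γ] [DecidableEq γ] (f : α → γ) (g : β → γ)
    (h : ∀ c, Fintype.card {a // f a = c} = Fintype.card {b // g b = c}) :
    Fintype.card {e : α ≃ β // ∀ a, g (e a) = f a} = ∏ c, (Fintype.card {a // f a = c})! := by
  obtain ⟨e₀, he₀⟩ : {e : α ≃ β // ∀ a, g (e a) = f a} :=
    ⟨ofFiberEquiv fun c => Fintype.equivOfCardEq (h c), ofFiberEquiv_map _⟩
  rw [← DomMulAct.stabilizer_card f]
  refine Fintype.card_congr
    { toFun := fun e => ⟨e.1.trans e₀.symm, funext fun a => ?_⟩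
      invFun := fun σ => ⟨σ.1.trans e₀, fun a => ?_⟩
      left_inv := fun e => by ext; simp
      right_inv := fun σ => by ext; simp }
  · simpa [← he₀] using e.2 a
  · simpa [he₀] using congrFun σ.2 a

namespace Function.Involutive

variable {V : Type*} {π : V → V} {P : V → Prop} [DecidablePred P]

def equivSubtypeProdBool (hπ : Involutive π) (hP : ∀ v, P (π v) ↔ ¬ P v) :
    V ≃ {v // P v} × Bool where
  toFun v := if h : P v then (⟨v, h⟩, false) else (⟨π v, (hP v).2 h⟩, true)
  invFun x := if x.2 then π x.1 else x.1
  left_inv v := by by_cases h : P v <;> simp [h, hπ v]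
  right_inv := by
    rintro ⟨⟨v, hv⟩, b⟩
    cases b <;> simp [hv, hπ v, hP]

theorem equivSubtypeProdBool_apply_apply (hπ : Involutive π) (hP : ∀ v, P (π v) ↔ ¬ P v)
    (v : V) :
    hπ.equivSubtypeProdBool hP (π v) = Prod.map id not (hπ.equivSubtypeProdBool hP v) := by
  by_cases h : P v <;> simp [equivSubtypeProdBool, h, hπ v, hP]

end Function.Involutive

theorem card_sigma_fst_eq_and {α : Type*} [DecidableEq α] {β : α → Type*}
    [Fintype (Σ a, β a)] (a : α) (P : (Σ a, β a) → Prop) [DecidablePred P] [Fintype (β a)] :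
    Fintype.card {x : Σ a, β a // x.1 = a ∧ P x} = Fintype.card {b : β a // P ⟨a, b⟩} := by
  refine Fintype.card_congr ((subtypeSubtypeEquivSubtypeInter _ P).symm.trans
    (subtypeEquiv (sigmaSubtype a) ?_))
  rintro ⟨⟨a, b⟩, rfl⟩
  exact Iff.rfl

namespace MultipartiteMatching

section Dart

variable {ι : Type*} [LinearOrder ι]

abbrev LtPair (ι : Type*) [LinearOrder ι] := {p : ι × ι // p.1 < p.2}

@[to_additive]
theorem prod_ltPair [Fintype ι] {M : Type*} [CommMonoid M] (f : ι → ι → M) :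
    ∏ k : LtPair ι, f k.1.1 k.1.2 = ∏ i, ∏ j ∈ univ.filter (fun j => i < j), f i j := by
  rw [← Finset.prod_subtype (univ.filter fun k : ι × ι => k.1 < k.2) (by simp)
    (fun k : ι × ι => f k.1 k.2), Finset.prod_filter, Fintype.prod_prod_type]
  simp only [Finset.prod_filter]

variable (τ : ι → ι → ℕ)

abbrev Edge := Σ k : LtPair ι, Fin (τ k.1.1 k.1.2)

/-- A dart `(e, b)` runs along `e` from its smaller end if `b = false`, from its larger end
if `b = true`. -/
abbrev Dart := Edge τ × Bool

variable {τ}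

def Dart.fst (d : Dart τ) : ι := if d.2 then d.1.1.1.2 else d.1.1.1.1

def Dart.symm : Perm (Dart τ) := (Equiv.refl _).prodCongr Equiv.boolNot

@[simp]
theorem Dart.symm_apply (e : Edge τ) (b : Bool) : Dart.symm (e, b) = (e, !b) := rfl

theorem Dart.symm_symm (d : Dart τ) : Dart.symm (Dart.symm d) = d := by
  obtain ⟨e, b⟩ := d
  simp

theorem Dart.edge_eq_of_snd_eq_false {d : Dart τ} (hd : d.2 = false) :
    d.1.1.1 = (d.fst, (Dart.symm d).fst) := by
  obtain ⟨e, b⟩ := d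
  subst hd
  rfl

theorem Dart.fst_lt_fst_symm_iff (d : Dart τ) : d.fst < (Dart.symm d).fst ↔ d.2 = false := by
  obtain ⟨⟨k, t⟩, b⟩ := d
  cases b <;> simp [Dart.fst, Dart.symm, k.2, k.2.le]

theorem Dart.fst_symm_ne (d : Dart τ) : (Dart.symm d).fst ≠ d.fst := by
  obtain ⟨⟨k, t⟩, b⟩ := d
  cases b <;> simp [Dart.fst, Dart.symm, k.2.ne, k.2.ne']

theorem card_dart_fst_eq [Fintype ι] (i : ι) :
    Fintype.card {d : Dart τ // d.fst = i} =
      (∑ j ∈ univ.filter (fun j => i < j), τ i j) + ∑ j ∈ univ.filter (fun j => j < i), τ j i := by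
  rw [Fintype.card_subtype, Finset.card_filter, Fintype.sum_prod_type, Fintype.sum_sigma]
  simp only [Dart.fst, Fintype.sum_bool, Bool.false_eq_true, if_true, if_false]
  simp only [Finset.sum_const, Finset.card_univ, Fintype.card_fin, smul_eq_mul,
    mul_add, Finset.sum_add_distrib, add_comm (∑ j ∈ _, τ i j)]
  congr 1
  · rw [sum_ltPair (fun a b => τ a b * if b = i then 1 else 0)]
    simp [Finset.sum_filter]
  · rw [sum_ltPair (fun a b => τ a b * if a = i then 1 else 0)]
    simp [Finset.sum_filter]

theorem card_dart_fst_snd_eq [Fintype ι] {i j : ι} (hij : i < j) :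
    Fintype.card {d : Dart τ // d.fst = i ∧ (Dart.symm d).fst = j} = τ i j := by
  rw [Fintype.card_subtype, Finset.card_filter, Fintype.sum_prod_type, Fintype.sum_sigma]
  simp only [Dart.fst, Dart.symm_apply, Fintype.sum_bool, Bool.false_eq_true, if_true, if_false,
    Bool.not_true, Bool.not_false, Finset.sum_const, Finset.card_univ, Fintype.card_fin,
    smul_eq_mul]
  rw [Fintype.sum_congr _
      (fun k : LtPair ι => τ k.1.1 k.1.2 * if k.1.1 = i ∧ k.1.2 = j then 1 else 0) fun k => ?_,
    sum_ltPair (fun a b => τ a b * if a = i ∧ b = j then 1 else 0)]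
  · simp [ite_and, hij]
  · have : ¬ (k.1.2 = i ∧ k.1.1 = j) := fun ⟨h2, h1⟩ => k.2.asymm (h1 ▸ h2 ▸ hij)
    simp [this]

end Dart

section Labelling

variable {ι : Type*} [LinearOrder ι] {V : Type*}

def IsMatchingOfType [Fintype V] (p : V → ι) (τ : ι → ι → ℕ) (π : Perm V) : Prop :=
  π * π = 1 ∧ (∀ v, p (π v) ≠ p v) ∧
    ∀ i j, i < j → Fintype.card {v // p v = i ∧ p (π v) = j} = τ i j

instance [Fintype ι] [Fintype V] [DecidableEq V] (p : V → ι) (τ : ι → ι → ℕ) :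
    DecidablePred (IsMatchingOfType p τ) := fun _ => by
  unfold IsMatchingOfType; infer_instance

abbrev Labelling (p : V → ι) (τ : ι → ι → ℕ) := {F : V ≃ Dart τ // ∀ v, (F v).fst = p v}

variable {p : V → ι} {τ : ι → ι → ℕ}

def Labelling.matching (F : Labelling p τ) : Perm V := F.1.symm.permCongr Dart.symm

theorem Labelling.matching_apply (F : Labelling p τ) (v : V) :
    F.matching v = F.1.symm (Dart.symm (F.1 v)) := rfl

theorem Labelling.matching_eq_iff (F : Labelling p τ) (π : Perm V) :
    F.matching = π ↔ ∀ v, F.1 (π v) = Dart.symm (F.1 v) :=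
  Equiv.ext_iff.trans (forall_congr' fun v => by rw [matching_apply, eq_comm, Equiv.eq_symm_apply])

theorem Labelling.isMatchingOfType_matching [Fintype ι] [Fintype V] (F : Labelling p τ) :
    IsMatchingOfType p τ F.matching := by
  have hp (w : V) : p w = (F.1 w).fst := (F.2 w).symm
  refine ⟨Equiv.ext fun v => by simp [matching_apply, Dart.symm_symm], fun v => ?_,
    fun i j hij => ?_⟩
  · simpa [hp, matching_apply] using Dart.fst_symm_ne (F.1 v)
  · rw [← card_dart_fst_snd_eq (τ := τ) hij]
    exact Fintype.card_congr (F.1.subtypeEquiv fun v => by simp [hp, matching_apply])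

section Fiber

variable {π : Perm V}

theorem lt_apply_involution_iff (hinv : Function.Involutive π) (hne : ∀ v, p (π v) ≠ p v)
    (v : V) : p (π v) < p (π (π v)) ↔ ¬ p v < p (π v) := by
  rw [hinv v, not_lt, le_iff_lt_or_eq, or_iff_left (hne v)]

theorem Labelling.snd_eq_false_iff (F : Labelling p τ) (hF : F.matching = π) (v : V) :
    (F.1 v).2 = false ↔ p v < p (π v) := by
  rw [← Dart.fst_lt_fst_symm_iff, ← (F.matching_eq_iff π).1 hF v, F.2, F.2]

def Labelling.lowerEdgeEquiv (F : Labelling p τ) (hF : F.matching = π) :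
    {v // p v < p (π v)} ≃ Edge τ where
  toFun v := (F.1 v).1
  invFun e := ⟨F.1.symm (e, false), by rw [← F.snd_eq_false_iff hF, apply_symm_apply]⟩
  left_inv v := Subtype.ext <| F.1.symm_apply_eq.2 <|
    Prod.ext rfl ((F.snd_eq_false_iff hF v).2 v.2).symm
  right_inv e := by simp

theorem Labelling.lowerEdgeEquiv_apply_fst (F : Labelling p τ) (hF : F.matching = π)
    (v : {v // p v < p (π v)}) : (F.lowerEdgeEquiv hF v).1 = ⟨(p v, p (π v)), v.2⟩ := by
  have h := Dart.edge_eq_of_snd_eq_false ((F.snd_eq_false_iff hF v).2 v.2)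
  rw [← (F.matching_eq_iff π).1 hF, F.2, F.2] at h
  exact Subtype.ext h

def Labelling.ofLowerEdgeEquiv (hinv : Function.Involutive π) (hne : ∀ v, p (π v) ≠ p v)
    (G : {v // p v < p (π v)} ≃ Edge τ) (hG : ∀ v, (G v).1 = ⟨(p v, p (π v)), v.2⟩) :
    Labelling p τ :=
  ⟨(hinv.equivSubtypeProdBool (lt_apply_involution_iff hinv hne)).trans
      (G.prodCongr (Equiv.refl Bool)), fun v => by
    by_cases h : p v < p (π v)
    · simp [Function.Involutive.equivSubtypeProdBool, h, Dart.fst, hG]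
    · simp [Function.Involutive.equivSubtypeProdBool, h, Dart.fst, hG, hinv v]⟩

theorem Labelling.matching_ofLowerEdgeEquiv (hinv : Function.Involutive π)
    (hne : ∀ v, p (π v) ≠ p v) (G : {v // p v < p (π v)} ≃ Edge τ)
    (hG : ∀ v, (G v).1 = ⟨(p v, p (π v)), v.2⟩) :
    (ofLowerEdgeEquiv hinv hne G hG).matching = π :=
  (matching_eq_iff _ π).2 fun v => by
    simp only [ofLowerEdgeEquiv, trans_apply,
      Function.Involutive.equivSubtypeProdBool_apply_apply]
    rfl

def matchingFiberEquiv (hinv : Function.Involutive π) (hne : ∀ v, p (π v) ≠ p v) :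
    {F : Labelling p τ // F.matching = π} ≃
      {G : {v // p v < p (π v)} ≃ Edge τ // ∀ v, (G v).1 = ⟨(p v, p (π v)), v.2⟩} where
  toFun F := ⟨F.1.lowerEdgeEquiv F.2, F.1.lowerEdgeEquiv_apply_fst F.2⟩
  invFun G := ⟨.ofLowerEdgeEquiv hinv hne G.1 G.2,
    Labelling.matching_ofLowerEdgeEquiv hinv hne G.1 G.2⟩
  left_inv F := by
    refine Subtype.ext (Subtype.ext (Equiv.ext fun v => ?_))
    by_cases h : p v < p (π v)
    · simp only [Labelling.ofLowerEdgeEquiv, Function.Involutive.equivSubtypeProdBool,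
        trans_apply, coe_fn_mk, h, ↓reduceDIte, prodCongr_apply, coe_refl, Prod.map_apply, id_eq]
      exact Prod.ext rfl ((F.1.snd_eq_false_iff F.2 v).2 h).symm
    · simp only [Labelling.ofLowerEdgeEquiv, Function.Involutive.equivSubtypeProdBool,
        trans_apply, coe_fn_mk, h, ↓reduceDIte, prodCongr_apply, coe_refl, Prod.map_apply,
        Labelling.lowerEdgeEquiv, (F.1.matching_eq_iff π).1 F.2 v, id_eq]
      have hv : (F.1.1 v).2 = true := by simpa using (F.1.snd_eq_false_iff F.2 v).not.2 h
      exact Prod.ext rfl hv.symm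
  right_inv G := by
    refine Subtype.ext (Equiv.ext fun v => ?_)
    simp [Labelling.ofLowerEdgeEquiv, Labelling.lowerEdgeEquiv,
      Function.Involutive.equivSubtypeProdBool, v.2]

theorem card_matchingFiber [Fintype ι] [Fintype V] [DecidableEq V] (hπ : IsMatchingOfType p τ π) :
    Fintype.card {F : Labelling p τ // F.matching = π} = ∏ k : LtPair ι, (τ k.1.1 k.1.2)! := by
  obtain ⟨hsq, hne, hcount⟩ := hπ
  have hinv : Function.Involutive π := fun v => by rw [← Perm.mul_apply, hsq, Perm.one_apply]
  have hcard (k : LtPair ι) :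
      Fintype.card {v : {v // p v < p (π v)} // (⟨(p v, p (π v)), v.2⟩ : LtPair ι) = k} =
        τ k.1.1 k.1.2 := by
    rw [← hcount _ _ k.2]
    refine Fintype.card_congr ((subtypeEquivRight fun v => ?_).trans
      (subtypeSubtypeEquivSubtype fun h => h.1 ▸ h.2 ▸ k.2))
    simp [Subtype.ext_iff, Prod.ext_iff]
  rw [Fintype.card_congr (matchingFiberEquiv hinv hne), card_fiberwise_equiv _ Sigma.fst fun k => by
    rw [hcard, Fintype.card_congr (sigmaSubtype k), Fintype.card_fin]]
  simp only [hcard]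

end Fiber

theorem card_isMatchingOfType_mul [Fintype ι] [Fintype V] [DecidableEq V]
    (hp : ∀ i, Fintype.card {v // p v = i} =
      (∑ j ∈ univ.filter (fun j => i < j), τ i j) + ∑ j ∈ univ.filter (fun j => j < i), τ j i) :
    Fintype.card {π // IsMatchingOfType p τ π} *
        ∏ i, ∏ j ∈ univ.filter (fun j => i < j), (τ i j)! =
      ∏ i, (Fintype.card {v // p v = i})! := by
  let Φ (F : Labelling p τ) : {π // IsMatchingOfType p τ π} :=
    ⟨F.matching, F.isMatchingOfType_matching⟩
  have hΦ (π : {π // IsMatchingOfType p τ π}) :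
      Fintype.card {F // Φ F = π} = ∏ i, ∏ j ∈ univ.filter (fun j => i < j), (τ i j)! := by
    rw [← prod_ltPair, ← card_matchingFiber π.2]
    exact Fintype.card_congr (subtypeEquivRight fun F => Subtype.ext_iff)
  rw [← card_fiberwise_equiv p Dart.fst fun i => (hp i).trans (card_dart_fst_eq i).symm,
    ← Finset.card_univ (α := Labelling p τ),
    Finset.card_eq_sum_card_fiberwise (f := Φ) (t := univ) (by simp)]
  simp [← Fintype.card_subtype, hΦ]

end Labelling

end MultipartiteMatching

theorem card_matchings_fiber_general {n : ℕ} (s : Fin n → ℕ)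
    (τ : Fin n → Fin n → ℕ)
    (hτ : ∀ i : Fin n,
      (∑ j ∈ Finset.univ.filter (fun j : Fin n => i < j), τ i j) +
        (∑ j ∈ Finset.univ.filter (fun j : Fin n => j < i), τ j i) = s i) :
    ((Finset.univ.filter
        (fun π : Equiv.Perm (Σ i : Fin n, Fin (s i)) =>
          π * π = 1 ∧ (∀ v, (π v).1 ≠ v.1) ∧
            ∀ i j : Fin n, i < j →
              (Finset.univ.filter (fun a : Fin (s i) => (π ⟨i, a⟩).1 = j)).card = τ i j)).card
       : ℚ) =
      ((∏ i, (s i).factorial : ℕ) : ℚ) /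
        ((∏ i, ∏ j ∈ Finset.univ.filter (fun j : Fin n => i < j), (τ i j).factorial : ℕ) : ℚ) := by
  have hcopies (i : Fin n) : Fintype.card {v : Σ i, Fin (s i) // v.1 = i} = s i := by
    rw [Fintype.card_congr (sigmaSubtype i), Fintype.card_fin]
  have key := MultipartiteMatching.card_isMatchingOfType_mul
    (p := (Sigma.fst : (Σ i, Fin (s i)) → Fin n)) (τ := τ) fun i => (hcopies i).trans (hτ i).symm
  simp only [hcopies] at key
  rw [eq_div_iff (by positivity), ← key, Fintype.card_subtype]
  push_cast
  simp only [MultipartiteMatching.IsMatchingOfType, card_sigma_fst_eq_and]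
  simp only [Fintype.card_subtype]

/-- fiber counting in the proof of Lemma 7 of the paper: let
`V = Σ i, Fin (s i)` be the vertex set consisting of `s i` copies of each vertex
`i ∈ {1, …, n}` and let `G_s` be the complete multipartite graph joining copies of
distinct vertices.  A perfect matching of `G_s` is a fixed-point-free involution `π`
of `V` that never matches two copies of the same vertex.  If `τ` is an `s`-matching
(`Σ_{j ≠ i} τ_{ij} = s_i` for all `i`, entries indexed by pairs `i < j`), then the
number of perfect matchings `π` of `G_s` having exactly `τ i j` edges between the
copies of `i` and the copies of `j` for every `i < j` equals `s!/τ!`. -/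
theorem card_matchings_fiber {n : ℕ} (hn : 1 ≤ n) (s : Fin n → ℕ) (hs : ∀ i, 1 ≤ s i)
    (τ : Fin n → Fin n → ℕ)
    (hτ : ∀ i : Fin n,
      (∑ j ∈ Finset.univ.filter (fun j : Fin n => i < j), τ i j) +
        (∑ j ∈ Finset.univ.filter (fun j : Fin n => j < i), τ j i) = s i) :
    ((Finset.univ.filter
        (fun π : Equiv.Perm (Σ i : Fin n, Fin (s i)) =>
          π * π = 1 ∧ (∀ v, (π v).1 ≠ v.1) ∧
            ∀ i j : Fin n, i < j →
              (Finset.univ.filter (fun a : Fin (s i) => (π ⟨i, a⟩).1 = j)).card = τ i j)).card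
       : ℚ) =
      ((∏ i, (s i).factorial : ℕ) : ℚ) /
        ((∏ i, ∏ j ∈ Finset.univ.filter (fun j : Fin n => i < j), (τ i j).factorial : ℕ) : ℚ) :=
  card_matchings_fiber_general s τ hτ
end

section
/- Let U be an n×n unitary matrix over ℂ with bandwidth D, let 1 ≤ k ≤ n, and let P_k be the diagonal projection matrix with (P_k)ᵢᵢ = 1 for i ≤ k and 0 otherwise. Then the matrix U† P_k U satisfies: (i) (U† P_k U)ᵢⱼ = δᵢⱼ whenever i ≤ k − D or j ≤ k − D; and (ii) (U† P_k U)ᵢⱼ = 0 whenever i > k + D or j > k + D. Consequently U† P_k U differs from P_k only in the (2D)×(2D) window of indices {k−D+1, …, k+D}, i.e. U† P_k U = I_k ⊕ K ⊕ 0_{n−k−D} up to a perturbation supported on that window, with K of size at most 2D×2D. (Intermediate claim in the proof of Lemma 2 of the paper.) -/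
open Matrix

/-- intermediate claim in the proof of Lemma 2 of the paper, 0-indexed:
let `U` be an `n × n` unitary matrix of bandwidth `D` and let `P` be the diagonal
projection onto the first `k` coordinates (`1 ≤ k ≤ n`).  Then
(i) `(U† P U) i j = δ i j` whenever `i + 1 ≤ k − D` or `j + 1 ≤ k − D` (1-indexed
`i ≤ k − D`), (ii) `(U† P U) i j = 0` whenever `i + 1 > k + D` or `j + 1 > k + D`,
and consequently `U† P U` agrees with `P` at all entries `(i, j)` such that `i` or
`j` lies outside the `2D`-window `{k − D + 1, …, k + D}` (1-indexed). -/
theorem unitary_conj_projection_window {n : ℕ} (D k : ℕ) (hk1 : 1 ≤ k) (hkn : k ≤ n)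
    (U : Matrix (Fin n) (Fin n) ℂ) (hU : Uᴴ * U = 1)
    (hband : ∀ i j : Fin n, (D : ℤ) < |(i : ℤ) - (j : ℤ)| → U i j = 0)
    (P : Matrix (Fin n) (Fin n) ℂ)
    (hP : ∀ i j : Fin n, P i j = if i = j ∧ (i : ℕ) < k then 1 else 0) :
    (∀ i j : Fin n, ((i : ℕ) + 1 + D ≤ k ∨ (j : ℕ) + 1 + D ≤ k) →
        (Uᴴ * P * U) i j = if i = j then 1 else 0) ∧
    (∀ i j : Fin n, (k + D ≤ (i : ℕ) ∨ k + D ≤ (j : ℕ)) → (Uᴴ * P * U) i j = 0) ∧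
    (∀ i j : Fin n,
        ¬(k ≤ (i : ℕ) + D ∧ (i : ℕ) < k + D) ∨ ¬(k ≤ (j : ℕ) + D ∧ (j : ℕ) < k + D) →
        (Uᴴ * P * U) i j = P i j) := by
  classical
  have entry : ∀ i j : Fin n, (Uᴴ * P * U) i j
      = ∑ l : Fin n, if (l : ℕ) < k then (starRingEnd ℂ) (U l i) * U l j else 0 := by
    intro i j
    rw [Matrix.mul_apply]
    simp only [Matrix.mul_apply, conjTranspose_apply, hP, mul_ite, mul_one, mul_zero,
      ite_and, Finset.sum_ite_eq, Finset.sum_ite_eq', Finset.mem_univ, if_true, ite_mul, zero_mul]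
    rfl
  have unit : ∀ i j : Fin n,
      (∑ l : Fin n, (starRingEnd ℂ) (U l i) * U l j) = if i = j then 1 else 0 := by
    intro i j
    have := congrFun (congrFun hU i) j
    simpa [Matrix.mul_apply, Matrix.one_apply, conjTranspose_apply] using this
  -- part (i)
  have part1 : ∀ i j : Fin n, ((i : ℕ) + 1 + D ≤ k ∨ (j : ℕ) + 1 + D ≤ k) →
      (Uᴴ * P * U) i j = if i = j then 1 else 0 := by
    intro i j h
    rw [entry, ← unit i j]
    apply Finset.sum_congr rfl
    intro l _
    by_cases hl : (l : ℕ) < k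
    · simp [hl]
    · simp only [hl, if_false]
      rcases h with h | h
      · have : U l i = 0 := by
          apply hband
          refine lt_of_lt_of_le ?_ (le_abs_self _)
          push_cast; omega
        simp [this]
      · have : U l j = 0 := by
          apply hband
          refine lt_of_lt_of_le ?_ (le_abs_self _)
          push_cast; omega
        simp [this]
  have part2 : ∀ i j : Fin n, (k + D ≤ (i : ℕ) ∨ k + D ≤ (j : ℕ)) →
      (Uᴴ * P * U) i j = 0 := by
    intro i j h
    rw [entry]
    apply Finset.sum_eq_zero
    intro l _
    by_cases hl : (l : ℕ) < k
    · simp only [hl, if_true]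
      rcases h with h | h
      · have : U l i = 0 := by
          apply hband
          refine lt_of_lt_of_le ?_ (neg_le_abs _)
          push_cast; omega
        simp [this]
      · have : U l j = 0 := by
          apply hband
          refine lt_of_lt_of_le ?_ (neg_le_abs _)
          push_cast; omega
        simp [this]
    · simp [hl]
  refine ⟨part1, part2, ?_⟩
  intro i j h
  have h' : ((i : ℕ) + 1 + D ≤ k ∨ (j : ℕ) + 1 + D ≤ k) ∨
      (k + D ≤ (i : ℕ) ∨ k + D ≤ (j : ℕ)) := by omega
  rcases h' with h' | h'
  · rw [part1 i j h', hP]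
    by_cases hij : i = j
    · subst hij
      have hik : (i : ℕ) < k := by omega
      simp [hik]
    · simp [hij]
  · rw [part2 i j h', hP]
    by_cases hij : i = j
    · subst hij
      have : ¬ (i : ℕ) < k := by
        have := i.2; omega
      simp [this]
    · simp [hij]
end
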